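/- arXiv:1911.09992 — 8 statements merged into one kernel-verified Lean document; each statement's English description precedes it below -/
import Mathlib

section
/- For every competitive equilibrium (S, p) in a Fisher market with indivisible goods in which every agent receives a nonempty bundle, there exist prices p' such that (S, p') is a competitive equilibrium and p'(S_i) = b_i for every agent i (budget-exhausting prices). -/
open Finset

/-- Total price of a bundle of items. -/
def price {m : ℕ} (p : Fin m → ℝ) (A : Finset (Fin m)) : ℝ := ∑ j ∈ A, p j

/-- An allocation: a partition of all items among the agents. -/
def IsAllocation {n m : ℕ} (S : Fin n → Finset (Fin m)) : Prop :=
  (∀ i j : Fin n, i ≠ j → Disjoint (S i) (S j)) ∧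
  Finset.univ.biUnion S = Finset.univ

/-- `r A B` means bundle `B` is weakly preferred to bundle `A`.
A monotone (ordinal) preference: total, transitive, and monotone w.r.t. inclusion. -/
def IsMonotonePref {m : ℕ} (r : Finset (Fin m) → Finset (Fin m) → Prop) : Prop :=
  (∀ A B, r A B ∨ r B A) ∧
  (∀ A B C, r A B → r B C → r A C) ∧
  (∀ A B : Finset (Fin m), A ⊆ B → r A B)

/-- Strict preference: `B` strictly preferred over `A`. -/
def SPref {m : ℕ} (r : Finset (Fin m) → Finset (Fin m) → Prop)
    (A B : Finset (Fin m)) : Prop := r A B ∧ ¬ r B A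

/-- A competitive equilibrium: an allocation together with nonnegative item prices such
that each agent's bundle is within budget and every strictly preferred bundle is
unaffordable. -/
def IsCE {n m : ℕ} (pref : Fin n → Finset (Fin m) → Finset (Fin m) → Prop)
    (b : Fin n → ℝ) (S : Fin n → Finset (Fin m)) (p : Fin m → ℝ) : Prop :=
  IsAllocation S ∧ (∀ j, 0 ≤ p j) ∧
  ∀ i, price p (S i) ≤ b i ∧ ∀ T, SPref (pref i) (S i) T → b i < price p T

/-- budget-exhausting prices are wlog: any CE in which every agent gets a
nonempty bundle can be turned into a CE with the same allocation whose prices exhaust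
every budget. -/
theorem budget_exhausting_wlog {n m : ℕ}
    (pref : Fin n → Finset (Fin m) → Finset (Fin m) → Prop)
    (hpref : ∀ i, IsMonotonePref (pref i))
    (b : Fin n → ℝ) (hb : ∀ i, 0 < b i)
    (S : Fin n → Finset (Fin m)) (p : Fin m → ℝ)
    (hCE : IsCE pref b S p)
    (hne : ∀ i, (S i).Nonempty) :
    ∃ p' : Fin m → ℝ, IsCE pref b S p' ∧ ∀ i, price p' (S i) = b i := by
  obtain ⟨⟨hdisj, hcover⟩, hpos, hagent⟩ := hCE
  have hmem : ∀ j : Fin m, ∃ i, j ∈ S i := by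
    intro j
    have : j ∈ Finset.univ.biUnion S := by rw [hcover]; exact mem_univ j
    simpa using this
  classical
  set owner : Fin m → Fin n := fun j => (hmem j).choose with howner
  have howner_mem : ∀ j, j ∈ S (owner j) := fun j => (hmem j).choose_spec
  have howner_eq : ∀ i j, j ∈ S i → owner j = i := by
    intro i j hj
    by_contra h
    have : j ∈ S (owner j) ∩ S i := Finset.mem_inter.mpr ⟨howner_mem j, hj⟩
    rw [Finset.disjoint_iff_inter_eq_empty.mp (hdisj _ _ h)] at this
    exact absurd this (Finset.notMem_empty j)
  set p' : Fin m → ℝ :=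
    fun j => p j + (b (owner j) - price p (S (owner j))) / (S (owner j)).card with hp'
  have hle : ∀ j, p j ≤ p' j := by
    intro j
    have h1 : 0 ≤ b (owner j) - price p (S (owner j)) :=
      sub_nonneg.mpr (hagent (owner j)).1
    have h2 : (0:ℝ) ≤ (S (owner j)).card := by positivity
    have := div_nonneg h1 h2
    simp only [hp']; linarith
  have hexh : ∀ i, price p' (S i) = b i := by
    intro i
    have hcard : (0:ℝ) < (S i).card := by
      have := (hne i).card_pos; exact_mod_cast this
    have : price p' (S i)
        = price p (S i) + (S i).card * ((b i - price p (S i)) / (S i).card) := by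
      simp only [price, hp']
      rw [Finset.sum_add_distrib]
      congr 1
      rw [Finset.sum_congr rfl fun j hj => by rw [howner_eq i j hj]]
      simp [mul_comm]
    rw [this, mul_div_cancel₀ _ (ne_of_gt hcard)]
    ring
  refine ⟨p', ⟨⟨hdisj, hcover⟩, fun j => le_trans (hpos j) (hle j), fun i => ⟨?_, ?_⟩⟩, hexh⟩
  · rw [hexh i]
  · intro T hT
    refine lt_of_lt_of_le ((hagent i).2 T hT) ?_
    exact Finset.sum_le_sum fun j _ => hle j
end

section
/- In a market with 2 agents with monotone preferences over 2 items and budgets b_1 > b_2 > 0, a competitive equilibrium exists: give agent 1 her most preferred single item at price b_1 and agent 2 the remaining item at price b_2. -/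
open Finset

lemma ce_aux
    (pref : Fin 2 → Finset (Fin 2) → Finset (Fin 2) → Prop)
    (hmono : ∀ i, ∀ A B : Finset (Fin 2), A ⊆ B → pref i A B)
    (b : Fin 2 → ℝ) (hb2 : 0 < b 1) (hb1 : b 1 < b 0)
    (j k : Fin 2) (hjk : j ≠ k) (huniv : ({j, k} : Finset (Fin 2)) = univ)
    (h0 : pref 0 {k} {j}) :
    ∀ i, price (fun t => if t = j then b 0 else b 1) (![{j},{k}] i) ≤ b i ∧
      ∀ T, (pref i (![{j},{k}] i) T ∧ ¬ pref i T (![{j},{k}] i)) →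
        b i < price (fun t => if t = j then b 0 else b 1) T := by
  set p : Fin 2 → ℝ := fun t => if t = j then b 0 else b 1 with hp
  have hcases : ∀ T : Finset (Fin 2), T = ∅ ∨ T = {j} ∨ T = {k} ∨ T = {j, k} := by
    intro T
    fin_cases j <;> fin_cases k <;> simp_all <;> fin_cases T <;> simp <;> decide
  have hpj : price p {j} = b 0 := by simp [price, hp]
  have hpk : price p {k} = b 1 := by simp [price, hp, hjk.symm]
  have hpjk : price p {j, k} = b 0 + b 1 := by
    rw [price, Finset.sum_insert (by simpa using hjk), Finset.sum_singleton]
    simp [hp, hjk.symm]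
  intro i
  fin_cases i
  · refine ⟨by simp [hpj], ?_⟩
    intro T ⟨h1, h2⟩
    rcases hcases T with rfl | rfl | rfl | rfl
    · exact absurd (hmono 0 _ _ (Finset.empty_subset _)) (by simpa using h2)
    · exact absurd (hmono 0 _ _ (le_refl _)) (by simpa using h2)
    · exact absurd h0 (by simpa using h2)
    · simpa [hpjk] using by linarith
  · refine ⟨by simp [hpk], ?_⟩
    intro T ⟨h1, h2⟩
    rcases hcases T with rfl | rfl | rfl | rfl
    · exact absurd (hmono 1 _ _ (Finset.empty_subset _)) (by simpa using h2)
    · simpa [hpj] using by linarith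
    · exact absurd (hmono 1 _ _ (le_refl _)) (by simpa using h2)
    · simpa [hpjk] using by linarith

lemma ce_alloc (j k : Fin 2) (hjk : j ≠ k) :
    IsAllocation (![({j} : Finset (Fin 2)), {k}]) := by
  constructor
  · intro i i' hii'
    fin_cases i <;> fin_cases i' <;> simp_all [Finset.disjoint_singleton, hjk.symm]
  · fin_cases j <;> fin_cases k <;> simp_all <;> decide

/-- with 2 agents, 2 items, monotone preferences and budgets
`b 0 > b 1 > 0`, a competitive equilibrium exists. -/
theorem ce_exists_two_items
    (pref : Fin 2 → Finset (Fin 2) → Finset (Fin 2) → Prop)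
    (hpref : ∀ i, IsMonotonePref (pref i))
    (b : Fin 2 → ℝ) (hb2 : 0 < b 1) (hb1 : b 1 < b 0) :
    ∃ (S : Fin 2 → Finset (Fin 2)) (p : Fin 2 → ℝ), IsCE pref b S p := by
  have hmono : ∀ i, ∀ A B : Finset (Fin 2), A ⊆ B → pref i A B := fun i => (hpref i).2.2
  have key : ∀ j k : Fin 2, j ≠ k → ({j, k} : Finset (Fin 2)) = univ → pref 0 {k} {j} →
      ∃ (S : Fin 2 → Finset (Fin 2)) (p : Fin 2 → ℝ), IsCE pref b S p := by
    intro j k hjk huniv h0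
    refine ⟨![{j},{k}], fun t => if t = j then b 0 else b 1,
      ce_alloc j k hjk, ?_, ce_aux pref hmono b hb2 hb1 j k hjk huniv h0⟩
    intro t
    by_cases h : t = j <;> simp [h] <;> linarith
  rcases (hpref 0).1 {0} {1} with h | h
  · exact key 1 0 (by decide) (by decide) h
  · exact key 0 1 (by decide) (by decide) h
end

section
/- There exist monotone strict preferences for 2 agents over 5 items such that for every budget profile with (4/3) b_2 > b_1 > b_2 > 0, no competitive equilibrium exists. -/
open Finset

/-- A strict preference: no two distinct bundles are indifferent. -/
def IsStrict {m : ℕ} (r : Finset (Fin m) → Finset (Fin m) → Prop) : Prop :=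
  ∀ A B : Finset (Fin m), r A B → r B A → A = B

/-- Pareto optimality: every other allocation makes some agent strictly worse off. -/
def ParetoOptimal {n m : ℕ} (pref : Fin n → Finset (Fin m) → Finset (Fin m) → Prop)
    (S : Fin n → Finset (Fin m)) : Prop :=
  ∀ S' : Fin n → Finset (Fin m), IsAllocation S' → S' ≠ S →
    ∃ i, SPref (pref i) (S' i) (S i)

/-- Alice's valuation in Example 1 (items A,B,C,D,E = 0,1,2,3,4). -/
def vAlice (S : Finset (Fin 5)) : ℝ :=
  (if (0 : Fin 5) ∈ S ∧ (1 : Fin 5) ∈ S then 700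
   else (if (0 : Fin 5) ∈ S then 10 else 0) + (if (1 : Fin 5) ∈ S then 20 else 0)) +
  (if (2 : Fin 5) ∈ S then 201 else 0) + (if (3 : Fin 5) ∈ S then 202 else 0) +
  (if (4 : Fin 5) ∈ S then 203 else 0)

/-- Bob's valuation in Example 1. -/
def vBob (S : Finset (Fin 5)) : ℝ :=
  (if (0 : Fin 5) ∈ S ∧ (1 : Fin 5) ∈ S then 502
   else (if (0 : Fin 5) ∈ S then 500 else 0) + (if (1 : Fin 5) ∈ S then 501 else 0)) +
  (if (2 : Fin 5) ∈ S then 201 else 0) + (if (3 : Fin 5) ∈ S then 202 else 0) +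
  (if (4 : Fin 5) ∈ S then 203 else 0)

/-- The ordinal preference profile of Example 1 (agent 0 = Alice, agent 1 = Bob). -/
def prefEx1 : Fin 2 → Finset (Fin 5) → Finset (Fin 5) → Prop :=
  fun i A B => if i = 0 then vAlice A ≤ vAlice B else vBob A ≤ vBob B

/-! ### Auxiliary definitions and lemmas -/

/-- ℕ-valued copy of `vAlice`. -/
def nAlice (S : Finset (Fin 5)) : ℕ :=
  (if (0 : Fin 5) ∈ S ∧ (1 : Fin 5) ∈ S then 700
   else (if (0 : Fin 5) ∈ S then 10 else 0) + (if (1 : Fin 5) ∈ S then 20 else 0)) +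
  (if (2 : Fin 5) ∈ S then 201 else 0) + (if (3 : Fin 5) ∈ S then 202 else 0) +
  (if (4 : Fin 5) ∈ S then 203 else 0)

/-- ℕ-valued copy of `vBob`. -/
def nBob (S : Finset (Fin 5)) : ℕ :=
  (if (0 : Fin 5) ∈ S ∧ (1 : Fin 5) ∈ S then 502
   else (if (0 : Fin 5) ∈ S then 500 else 0) + (if (1 : Fin 5) ∈ S then 501 else 0)) +
  (if (2 : Fin 5) ∈ S then 201 else 0) + (if (3 : Fin 5) ∈ S then 202 else 0) +
  (if (4 : Fin 5) ∈ S then 203 else 0)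

lemma vAlice_eq_nat (S : Finset (Fin 5)) : vAlice S = (nAlice S : ℝ) := by
  simp only [vAlice, nAlice]; split_ifs <;> norm_num

lemma vBob_eq_nat (S : Finset (Fin 5)) : vBob S = (nBob S : ℝ) := by
  simp only [vBob, nBob]; split_ifs <;> norm_num

lemma nAlice_mono : ∀ A B : Finset (Fin 5), A ⊆ B → nAlice A ≤ nAlice B := by decide

lemma nBob_mono : ∀ A B : Finset (Fin 5), A ⊆ B → nBob A ≤ nBob B := by decide

/-- binary encoding of a bundle, used as a tie-breaker -/
def enc (S : Finset (Fin 5)) : ℕ := ∑ j ∈ S, 2 ^ (j : ℕ)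

lemma enc_mono : ∀ A B : Finset (Fin 5), A ⊆ B → enc A ≤ enc B := by decide

lemma enc_inj : ∀ A B : Finset (Fin 5), enc A = enc B → A = B := by decide

/-- the cardinal valuation profile -/
def cval : Fin 2 → Finset (Fin 5) → ℝ := ![vAlice, vBob]

lemma cval_mono (i : Fin 2) {A B : Finset (Fin 5)} (h : A ⊆ B) : cval i A ≤ cval i B := by
  fin_cases i
  · simpa [cval, vAlice_eq_nat] using (Nat.cast_le (α := ℝ)).mpr (nAlice_mono A B h)
  · simpa [cval, vBob_eq_nat] using (Nat.cast_le (α := ℝ)).mpr (nBob_mono A B h)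

/-- the strict monotone preference profile: cardinal values with a tie-breaker -/
def myPref : Fin 2 → Finset (Fin 5) → Finset (Fin 5) → Prop :=
  fun i A B => cval i A < cval i B ∨ (cval i A = cval i B ∧ enc A ≤ enc B)

lemma spref_of_lt {i : Fin 2} {A B : Finset (Fin 5)} (h : cval i A < cval i B) :
    SPref (myPref i) A B := by
  refine ⟨Or.inl h, ?_⟩
  rintro (h' | ⟨h', -⟩) <;> linarith

lemma price_eq (p : Fin 5 → ℝ) (A : Finset (Fin 5)) :
    price p A = (if (0:Fin 5) ∈ A then p 0 else 0) + (if (1:Fin 5) ∈ A then p 1 else 0)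
      + (if (2:Fin 5) ∈ A then p 2 else 0) + (if (3:Fin 5) ∈ A then p 3 else 0)
      + (if (4:Fin 5) ∈ A then p 4 else 0) := by
  have h : A = Finset.univ.filter (· ∈ A) := by ext x; simp
  rw [price]
  conv_lhs => rw [h]
  rw [Finset.sum_filter, Fin.sum_univ_five]

/-- there exist strict monotone preferences for 2 agents over 5 items such
that for every budget profile with `(4/3)·b₂ > b₁ > b₂ > 0`, no CE exists. -/
theorem no_ce_five_items :
    ∃ pref : Fin 2 → Finset (Fin 5) → Finset (Fin 5) → Prop,
      (∀ i, IsMonotonePref (pref i) ∧ IsStrict (pref i)) ∧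
      ∀ b₁ b₂ : ℝ, 0 < b₂ → b₂ < b₁ → b₁ < 4 / 3 * b₂ →
        ¬ ∃ (S : Fin 2 → Finset (Fin 5)) (p : Fin 5 → ℝ), IsCE pref ![b₁, b₂] S p := by
  refine ⟨myPref, ?_, ?_⟩
  · intro i
    constructor
    · refine ⟨?_, ?_, ?_⟩
      · intro A B
        rcases lt_trichotomy (cval i A) (cval i B) with h | h | h
        · exact Or.inl (Or.inl h)
        · rcases le_total (enc A) (enc B) with he | he
          · exact Or.inl (Or.inr ⟨h, he⟩)
          · exact Or.inr (Or.inr ⟨h.symm, he⟩)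
        · exact Or.inr (Or.inl h)
      · rintro A B C (h1 | ⟨h1, e1⟩) (h2 | ⟨h2, e2⟩)
        · exact Or.inl (h1.trans h2)
        · exact Or.inl (lt_of_lt_of_eq h1 h2)
        · exact Or.inl (lt_of_eq_of_lt h1 h2)
        · exact Or.inr ⟨h1.trans h2, e1.trans e2⟩
      · intro A B h
        rcases eq_or_lt_of_le (cval_mono i h) with he | hl
        · exact Or.inr ⟨he, enc_mono A B h⟩
        · exact Or.inl hl
    · rintro A B (h1 | ⟨h1, e1⟩) (h2 | ⟨h2, e2⟩)
      · exact absurd h2 (asymm h1)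
      · exact absurd h2.symm (ne_of_lt h1)
      · exact absurd h1.symm (ne_of_lt h2)
      · exact enc_inj A B (le_antisymm e1 e2)
  · intro b₁ b₂ hb2 hb21 hb14 hex
    obtain ⟨S, p, ⟨hdis, hcov⟩, hpnn, hopt⟩ := hex
    have hA1 : price p (S 0) ≤ b₁ := by simpa using (hopt 0).1
    have hA2 : price p (S 1) ≤ b₂ := by simpa using (hopt 1).1
    have hPA : ∀ T, vAlice (S 0) < vAlice T → b₁ < price p T := by
      intro T h
      have := (hopt 0).2 T (spref_of_lt (i := 0) (by simpa [cval] using h))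
      simpa using this
    have hPB : ∀ T, vBob (S 1) < vBob T → b₂ < price p T := by
      intro T h
      have := (hopt 1).2 T (spref_of_lt (i := 1) (by simpa [cval] using h))
      simpa using this
    have hmem : ∀ j : Fin 5, j ∈ S 1 ↔ j ∉ S 0 := by
      intro j
      have hj : j ∈ S 0 ∨ j ∈ S 1 := by
        have hju : j ∈ Finset.univ.biUnion S := hcov ▸ Finset.mem_univ j
        obtain ⟨i, -, hi⟩ := Finset.mem_biUnion.mp hju
        fin_cases i
        · exact Or.inl hi
        · exact Or.inr hi
      have hd := hdis 0 1 (by decide)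
      constructor
      · intro h1 h0
        exact (Finset.disjoint_left.mp hd) h0 h1
      · intro h0
        rcases hj with h | h
        · exact absurd h h0
        · exact h
    by_cases h0 : (0:Fin 5) ∈ S 0 <;> by_cases h1 : (1:Fin 5) ∈ S 0 <;>
      by_cases h2 : (2:Fin 5) ∈ S 0 <;> by_cases h3 : (3:Fin 5) ∈ S 0 <;>
      by_cases h4 : (4:Fin 5) ∈ S 0
    all_goals (
      rw [price_eq] at hA1 hA2
      simp only [hmem] at hA2
      simp only [h0, h1, h2, h3, h4, if_pos, if_neg, not_true, not_false_iff,
        if_true, if_false, ite_true, ite_false, not_false_eq_true, add_zero, zero_add] at hA1 hA2 )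
    · have k1 := hPB {0} (by simp [vBob, hmem, h0, h1, h2, h3, h4]; try norm_num)
      have k2 := hPB {1} (by simp [vBob, hmem, h0, h1, h2, h3, h4]; try norm_num)
      rw [price_eq] at k1 k2; simp at k1 k2
      linarith [hpnn 0, hpnn 1, hpnn 2, hpnn 3, hpnn 4]
    · have k1 := hPB {0} (by simp [vBob, hmem, h0, h1, h2, h3, h4]; try norm_num)
      have k2 := hPB {1} (by simp [vBob, hmem, h0, h1, h2, h3, h4]; try norm_num)
      rw [price_eq] at k1 k2; simp at k1 k2
      linarith [hpnn 0, hpnn 1, hpnn 2, hpnn 3, hpnn 4]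
    · have k1 := hPB {0} (by simp [vBob, hmem, h0, h1, h2, h3, h4]; try norm_num)
      have k2 := hPB {1} (by simp [vBob, hmem, h0, h1, h2, h3, h4]; try norm_num)
      rw [price_eq] at k1 k2; simp at k1 k2
      linarith [hpnn 0, hpnn 1, hpnn 2, hpnn 3, hpnn 4]
    · have k1 := hPB {0} (by simp [vBob, hmem, h0, h1, h2, h3, h4]; try norm_num)
      have k2 := hPB {1} (by simp [vBob, hmem, h0, h1, h2, h3, h4]; try norm_num)
      rw [price_eq] at k1 k2; simp at k1 k2
      linarith [hpnn 0, hpnn 1, hpnn 2, hpnn 3, hpnn 4]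
    · have k1 := hPB {0} (by simp [vBob, hmem, h0, h1, h2, h3, h4]; try norm_num)
      have k2 := hPB {1} (by simp [vBob, hmem, h0, h1, h2, h3, h4]; try norm_num)
      rw [price_eq] at k1 k2; simp at k1 k2
      linarith [hpnn 0, hpnn 1, hpnn 2, hpnn 3, hpnn 4]
    · have k1 := hPB {0} (by simp [vBob, hmem, h0, h1, h2, h3, h4]; try norm_num)
      have k2 := hPB {1} (by simp [vBob, hmem, h0, h1, h2, h3, h4]; try norm_num)
      rw [price_eq] at k1 k2; simp at k1 k2
      linarith [hpnn 0, hpnn 1, hpnn 2, hpnn 3, hpnn 4]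
    · have k1 := hPB {0} (by simp [vBob, hmem, h0, h1, h2, h3, h4]; try norm_num)
      have k2 := hPB {1} (by simp [vBob, hmem, h0, h1, h2, h3, h4]; try norm_num)
      rw [price_eq] at k1 k2; simp at k1 k2
      linarith [hpnn 0, hpnn 1, hpnn 2, hpnn 3, hpnn 4]
    · have k1 := hPB {0,2} (by simp [vBob, hmem, h0, h1, h2, h3, h4]; try norm_num)
      have k2 := hPB {0,3} (by simp [vBob, hmem, h0, h1, h2, h3, h4]; try norm_num)
      have k3 := hPB {0,4} (by simp [vBob, hmem, h0, h1, h2, h3, h4]; try norm_num)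
      have k4 := hPB {1,2} (by simp [vBob, hmem, h0, h1, h2, h3, h4]; try norm_num)
      have k5 := hPB {1,3} (by simp [vBob, hmem, h0, h1, h2, h3, h4]; try norm_num)
      have k6 := hPB {1,4} (by simp [vBob, hmem, h0, h1, h2, h3, h4]; try norm_num)
      rw [price_eq] at k1 k2 k3 k4 k5 k6; simp at k1 k2 k3 k4 k5 k6
      linarith [hpnn 0, hpnn 1, hpnn 2, hpnn 3, hpnn 4]
    · have k1 := hPA {0,1} (by simp [vAlice, h0, h1, h2, h3, h4]; try norm_num)
      have k2 := hPB {2,3,4} (by simp [vBob, hmem, h0, h1, h2, h3, h4]; try norm_num)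
      rw [price_eq] at k1 k2; simp at k1 k2
      linarith [hpnn 0, hpnn 1, hpnn 2, hpnn 3, hpnn 4]
    · have k1 := hPA {0,1} (by simp [vAlice, h0, h1, h2, h3, h4]; try norm_num)
      have k2 := hPA {2,3,4} (by simp [vAlice, h0, h1, h2, h3, h4]; try norm_num)
      rw [price_eq] at k1 k2; simp at k1 k2
      linarith [hpnn 0, hpnn 1, hpnn 2, hpnn 3, hpnn 4]
    · have k1 := hPA {0,1} (by simp [vAlice, h0, h1, h2, h3, h4]; try norm_num)
      have k2 := hPA {2,3,4} (by simp [vAlice, h0, h1, h2, h3, h4]; try norm_num)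
      rw [price_eq] at k1 k2; simp at k1 k2
      linarith [hpnn 0, hpnn 1, hpnn 2, hpnn 3, hpnn 4]
    · have k1 := hPA {0,1} (by simp [vAlice, h0, h1, h2, h3, h4]; try norm_num)
      have k2 := hPA {2,3,4} (by simp [vAlice, h0, h1, h2, h3, h4]; try norm_num)
      rw [price_eq] at k1 k2; simp at k1 k2
      linarith [hpnn 0, hpnn 1, hpnn 2, hpnn 3, hpnn 4]
    · have k1 := hPA {0,1} (by simp [vAlice, h0, h1, h2, h3, h4]; try norm_num)
      have k2 := hPA {2,3,4} (by simp [vAlice, h0, h1, h2, h3, h4]; try norm_num)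
      rw [price_eq] at k1 k2; simp at k1 k2
      linarith [hpnn 0, hpnn 1, hpnn 2, hpnn 3, hpnn 4]
    · have k1 := hPA {0,1} (by simp [vAlice, h0, h1, h2, h3, h4]; try norm_num)
      have k2 := hPA {2,3,4} (by simp [vAlice, h0, h1, h2, h3, h4]; try norm_num)
      rw [price_eq] at k1 k2; simp at k1 k2
      linarith [hpnn 0, hpnn 1, hpnn 2, hpnn 3, hpnn 4]
    · have k1 := hPA {0,1} (by simp [vAlice, h0, h1, h2, h3, h4]; try norm_num)
      have k2 := hPA {2,3,4} (by simp [vAlice, h0, h1, h2, h3, h4]; try norm_num)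
      rw [price_eq] at k1 k2; simp at k1 k2
      linarith [hpnn 0, hpnn 1, hpnn 2, hpnn 3, hpnn 4]
    · have k1 := hPA {0,1} (by simp [vAlice, h0, h1, h2, h3, h4]; try norm_num)
      have k2 := hPA {2,3,4} (by simp [vAlice, h0, h1, h2, h3, h4]; try norm_num)
      rw [price_eq] at k1 k2; simp at k1 k2
      linarith [hpnn 0, hpnn 1, hpnn 2, hpnn 3, hpnn 4]
    · have k1 := hPA {0,1} (by simp [vAlice, h0, h1, h2, h3, h4]; try norm_num)
      have k2 := hPB {2,3,4} (by simp [vBob, hmem, h0, h1, h2, h3, h4]; try norm_num)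
      rw [price_eq] at k1 k2; simp at k1 k2
      linarith [hpnn 0, hpnn 1, hpnn 2, hpnn 3, hpnn 4]
    · have k1 := hPA {0,1} (by simp [vAlice, h0, h1, h2, h3, h4]; try norm_num)
      have k2 := hPA {2,3,4} (by simp [vAlice, h0, h1, h2, h3, h4]; try norm_num)
      rw [price_eq] at k1 k2; simp at k1 k2
      linarith [hpnn 0, hpnn 1, hpnn 2, hpnn 3, hpnn 4]
    · have k1 := hPA {0,1} (by simp [vAlice, h0, h1, h2, h3, h4]; try norm_num)
      have k2 := hPA {2,3,4} (by simp [vAlice, h0, h1, h2, h3, h4]; try norm_num)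
      rw [price_eq] at k1 k2; simp at k1 k2
      linarith [hpnn 0, hpnn 1, hpnn 2, hpnn 3, hpnn 4]
    · have k1 := hPA {0,1} (by simp [vAlice, h0, h1, h2, h3, h4]; try norm_num)
      have k2 := hPA {2,3,4} (by simp [vAlice, h0, h1, h2, h3, h4]; try norm_num)
      rw [price_eq] at k1 k2; simp at k1 k2
      linarith [hpnn 0, hpnn 1, hpnn 2, hpnn 3, hpnn 4]
    · have k1 := hPA {0,1} (by simp [vAlice, h0, h1, h2, h3, h4]; try norm_num)
      have k2 := hPA {2,3,4} (by simp [vAlice, h0, h1, h2, h3, h4]; try norm_num)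
      rw [price_eq] at k1 k2; simp at k1 k2
      linarith [hpnn 0, hpnn 1, hpnn 2, hpnn 3, hpnn 4]
    · have k1 := hPA {0,1} (by simp [vAlice, h0, h1, h2, h3, h4]; try norm_num)
      have k2 := hPA {2,3,4} (by simp [vAlice, h0, h1, h2, h3, h4]; try norm_num)
      rw [price_eq] at k1 k2; simp at k1 k2
      linarith [hpnn 0, hpnn 1, hpnn 2, hpnn 3, hpnn 4]
    · have k1 := hPA {0,1} (by simp [vAlice, h0, h1, h2, h3, h4]; try norm_num)
      have k2 := hPA {2,3,4} (by simp [vAlice, h0, h1, h2, h3, h4]; try norm_num)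
      rw [price_eq] at k1 k2; simp at k1 k2
      linarith [hpnn 0, hpnn 1, hpnn 2, hpnn 3, hpnn 4]
    · have k1 := hPA {0,1} (by simp [vAlice, h0, h1, h2, h3, h4]; try norm_num)
      have k2 := hPA {2,3,4} (by simp [vAlice, h0, h1, h2, h3, h4]; try norm_num)
      rw [price_eq] at k1 k2; simp at k1 k2
      linarith [hpnn 0, hpnn 1, hpnn 2, hpnn 3, hpnn 4]
    · have k1 := hPA {0,1} (by simp [vAlice, h0, h1, h2, h3, h4]; try norm_num)
      rw [price_eq] at k1; simp at k1
      linarith [hpnn 0, hpnn 1, hpnn 2, hpnn 3, hpnn 4]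
    · have k1 := hPA {0,1} (by simp [vAlice, h0, h1, h2, h3, h4]; try norm_num)
      rw [price_eq] at k1; simp at k1
      linarith [hpnn 0, hpnn 1, hpnn 2, hpnn 3, hpnn 4]
    · have k1 := hPA {0,1} (by simp [vAlice, h0, h1, h2, h3, h4]; try norm_num)
      rw [price_eq] at k1; simp at k1
      linarith [hpnn 0, hpnn 1, hpnn 2, hpnn 3, hpnn 4]
    · have k1 := hPA {0,1} (by simp [vAlice, h0, h1, h2, h3, h4]; try norm_num)
      rw [price_eq] at k1; simp at k1
      linarith [hpnn 0, hpnn 1, hpnn 2, hpnn 3, hpnn 4]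
    · have k1 := hPA {0,1} (by simp [vAlice, h0, h1, h2, h3, h4]; try norm_num)
      rw [price_eq] at k1; simp at k1
      linarith [hpnn 0, hpnn 1, hpnn 2, hpnn 3, hpnn 4]
    · have k1 := hPA {0,1} (by simp [vAlice, h0, h1, h2, h3, h4]; try norm_num)
      rw [price_eq] at k1; simp at k1
      linarith [hpnn 0, hpnn 1, hpnn 2, hpnn 3, hpnn 4]
    · have k1 := hPA {0,1} (by simp [vAlice, h0, h1, h2, h3, h4]; try norm_num)
      rw [price_eq] at k1; simp at k1
      linarith [hpnn 0, hpnn 1, hpnn 2, hpnn 3, hpnn 4]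
    · have k1 := hPA {0,1} (by simp [vAlice, h0, h1, h2, h3, h4]; try norm_num)
      rw [price_eq] at k1; simp at k1
      linarith [hpnn 0, hpnn 1, hpnn 2, hpnn 3, hpnn 4]
end

section
/- There exists a responsive monotone preference over 5 items that cannot be represented by any additive valuation (ADD is strictly contained in RSPN). Specifically, a responsive preference induced by A ≻* B ≻* C ≻* D ≻* E can simultaneously satisfy {A,D} ≻ {B,C,D} and {B,C,E} ≻ {A,E}, which no additive valuation can represent. -/
open Finset

/-- `A` and `B` are indifferent under `r`. -/
def Indiff {m : ℕ} (r : Finset (Fin m) → Finset (Fin m) → Prop)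
    (A B : Finset (Fin m)) : Prop := r A B ∧ r B A

/-- A valuation `v` represents the ordinal preference `r`. -/
def Represents {m : ℕ} (v : Finset (Fin m) → ℝ)
    (r : Finset (Fin m) → Finset (Fin m) → Prop) : Prop :=
  ∀ A B, r A B ↔ v A ≤ v B

/-- The additive valuation with item values `w`. -/
def additive {m : ℕ} (w : Fin m → ℝ) : Finset (Fin m) → ℝ := fun A => ∑ j ∈ A, w j

/-- Submodularity of a valuation. -/
def Submodular {m : ℕ} (v : Finset (Fin m) → ℝ) : Prop :=
  ∀ A B : Finset (Fin m), v (A ∪ B) + v (A ∩ B) ≤ v A + v B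

/-- Satiation only at the top: if item `j` adds nothing to `T`, it adds nothing to any
superset `S` of `T` (with `j ∉ S`). -/
def SatiationOnlyAtTop {m : ℕ} (r : Finset (Fin m) → Finset (Fin m) → Prop) : Prop :=
  ∀ T S : Finset (Fin m), ∀ j : Fin m, T ⊂ S → j ∉ S →
    Indiff r T (insert j T) → Indiff r S (insert j S)

/-- A preference `r` over bundles is responsive to the item ranking `rank`. -/
def ResponsiveTo {m : ℕ} (r : Finset (Fin m) → Finset (Fin m) → Prop)
    (rank : Fin m → ℝ) : Prop :=
  ∀ (A : Finset (Fin m)) (j j' : Fin m), j ∉ A → j' ∉ A →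
    (r (insert j' A) (insert j A) ↔ rank j' ≤ rank j) ∧
    (SPref r (insert j' A) (insert j A) ↔ rank j' < rank j)

def myW : Fin 5 → ℕ := ![51, 30, 20, 10, 5]

def myU (S : Finset (Fin 5)) : ℕ :=
  (∑ j ∈ S, myW j) + (if ({1,2,4} : Finset (Fin 5)) ⊆ S then 2 else 0)

lemma resp_core : ∀ (A : Finset (Fin 5)) (j j' : Fin 5), j ∉ A → j' ∉ A →
    (myU (insert j' A) ≤ myU (insert j A) ↔ myW j' ≤ myW j) ∧
    (myU (insert j' A) < myU (insert j A) ↔ myW j' < myW j) := by decide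

lemma mono_core : ∀ A B : Finset (Fin 5), A ⊆ B → myU A ≤ myU B := by decide

/-- there is a responsive monotone preference over 5 items, induced by the
item order A ≻* B ≻* C ≻* D ≻* E, satisfying {A,D} ≻ {B,C,D} and {B,C,E} ≻ {A,E}, that
cannot be represented by any additive valuation (ADD ⊊ RSPN). -/
theorem responsive_not_additive :
    ∃ (r : Finset (Fin 5) → Finset (Fin 5) → Prop) (rank : Fin 5 → ℝ),
      IsMonotonePref r ∧
      rank 4 < rank 3 ∧ rank 3 < rank 2 ∧ rank 2 < rank 1 ∧ rank 1 < rank 0 ∧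
      ResponsiveTo r rank ∧
      SPref r ({1, 2, 3} : Finset (Fin 5)) ({0, 3} : Finset (Fin 5)) ∧
      SPref r ({0, 4} : Finset (Fin 5)) ({1, 2, 4} : Finset (Fin 5)) ∧
      ¬ ∃ w : Fin 5 → ℝ, Represents (additive w) r := by
  refine ⟨fun A B => myU A ≤ myU B, fun j => (myW j : ℝ), ?_, ?_, ?_, ?_, ?_, ?_, ?_, ?_, ?_⟩
  · exact ⟨fun A B => le_total _ _, fun A B C => le_trans, mono_core⟩
  · show (myW 4 : ℝ) < myW 3; exact_mod_cast (by decide : myW 4 < myW 3)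
  · show (myW 3 : ℝ) < myW 2; exact_mod_cast (by decide : myW 3 < myW 2)
  · show (myW 2 : ℝ) < myW 1; exact_mod_cast (by decide : myW 2 < myW 1)
  · show (myW 1 : ℝ) < myW 0; exact_mod_cast (by decide : myW 1 < myW 0)
  · intro A j j' hj hj'
    dsimp only
    obtain ⟨h1, h2⟩ := resp_core A j j' hj hj'
    constructor
    · rw [h1]; exact_mod_cast Iff.rfl
    · constructor
      · rintro ⟨ha, hb⟩
        have : myU (insert j' A) < myU (insert j A) := lt_of_le_not_ge ha hb
        exact_mod_cast h2.mp this
      · intro h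
        have h' : myW j' < myW j := by exact_mod_cast (h : ((myW j' : ℝ)) < myW j)
        have := h2.mpr h'
        exact ⟨this.le, not_le_of_gt this⟩
  · exact (by decide : myU ({1,2,3} : Finset (Fin 5)) ≤ myU {0,3} ∧
      ¬ myU ({0,3} : Finset (Fin 5)) ≤ myU {1,2,3})
  · exact (by decide : myU ({0,4} : Finset (Fin 5)) ≤ myU {1,2,4} ∧
      ¬ myU ({1,2,4} : Finset (Fin 5)) ≤ myU {0,4})
  · rintro ⟨v, hv⟩
    have h1 : additive v {1,2,3} < additive v {0,3} := by
      have ha := (hv {1,2,3} {0,3}).mp (by decide)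
      have hb := fun h => (by decide : ¬ myU ({0,3} : Finset (Fin 5)) ≤ myU {1,2,3})
        ((hv {0,3} {1,2,3}).mpr h)
      exact lt_of_le_not_ge ha hb
    have h2 : additive v {0,4} < additive v {1,2,4} := by
      have ha := (hv {0,4} {1,2,4}).mp (by decide)
      have hb := fun h => (by decide : ¬ myU ({1,2,4} : Finset (Fin 5)) ≤ myU {0,4})
        ((hv {1,2,4} {0,4}).mpr h)
      exact lt_of_le_not_ge ha hb
    simp [additive, Finset.sum_insert, Finset.mem_insert] at h1 h2
    linarith
end

section
/- Every monotone ordinal preference satisfying satiation-only-at-the-top can be represented by a submodular valuation. -/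
open Finset

open Classical in
/-- Rank of a bundle: number of bundles strictly below it. -/
noncomputable def rnk {m : ℕ} (r : Finset (Fin m) → Finset (Fin m) → Prop)
    (A : Finset (Fin m)) : ℕ :=
  (Finset.univ.filter (fun B => SPref r B A)).card

section Aux

variable {m : ℕ} {r : Finset (Fin m) → Finset (Fin m) → Prop}

lemma r_refl (hr : IsMonotonePref r) (A : Finset (Fin m)) : r A A :=
  hr.2.2 A A (Finset.Subset.refl A)

lemma rnk_mono (hr : IsMonotonePref r) {A B : Finset (Fin m)} (h : r A B) :
    rnk r A ≤ rnk r B := by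
  classical
  apply Finset.card_le_card
  intro C hC
  simp only [Finset.mem_filter, Finset.mem_univ, true_and] at hC ⊢
  exact ⟨hr.2.1 _ _ _ hC.1 h, fun hBC => hC.2 (hr.2.1 _ _ _ h hBC)⟩

lemma rnk_lt (hr : IsMonotonePref r) {A B : Finset (Fin m)} (h : SPref r A B) :
    rnk r A < rnk r B := by
  classical
  apply Finset.card_lt_card
  constructor
  · intro C hC
    simp only [Finset.mem_filter, Finset.mem_univ, true_and] at hC ⊢
    exact ⟨hr.2.1 _ _ _ hC.1 h.1, fun hBC => hC.2 (hr.2.1 _ _ _ h.1 hBC)⟩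
  · intro hsub
    have : A ∈ Finset.univ.filter (fun C => SPref r C B) := by
      simp only [Finset.mem_filter, Finset.mem_univ, true_and]; exact h
    have := hsub this
    simp only [Finset.mem_filter, Finset.mem_univ, true_and] at this
    exact this.2 (r_refl hr A)

lemma r_iff_rnk (hr : IsMonotonePref r) (A B : Finset (Fin m)) :
    r A B ↔ rnk r A ≤ rnk r B := by
  constructor
  · exact rnk_mono hr
  · intro h
    by_contra hAB
    rcases hr.1 A B with h' | h'
    · exact hAB h'
    · exact absurd h (not_le.mpr (rnk_lt hr ⟨h', hAB⟩))

/-- Key consequence of satiation-only-at-top: adding a set `D` (disjoint from `S`)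
that adds nothing to `T ⊆ S` also adds nothing to `S`. -/
lemma key_lemma (hr : IsMonotonePref r) (hsat : SatiationOnlyAtTop r)
    (D : Finset (Fin m)) : ∀ T S : Finset (Fin m), T ⊆ S → Disjoint D S →
    Indiff r T (T ∪ D) → Indiff r S (S ∪ D) := by
  classical
  induction D using Finset.induction_on with
  | empty =>
    intro T S _ _ _
    rw [Finset.union_empty]
    exact ⟨r_refl hr S, r_refl hr S⟩
  | @insert j D hjD ih =>
    intro T S hTS hdisj hind
    have hjS : j ∉ S := by
      intro hj
      exact (Finset.disjoint_left.mp hdisj (Finset.mem_insert_self j D)) hj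
    have hDS : Disjoint D S :=
      Finset.disjoint_of_subset_left (Finset.subset_insert j D) hdisj
    -- T ~ T ∪ D (sandwich)
    have h1 : T ∪ D ⊆ T ∪ insert j D :=
      Finset.union_subset_union_right (Finset.subset_insert j D)
    have hTD : Indiff r T (T ∪ D) :=
      ⟨hr.2.2 _ _ Finset.subset_union_left,
       hr.2.1 _ _ _ (hr.2.2 _ _ h1) hind.2⟩
    have hSD : Indiff r S (S ∪ D) := ih T S hTS hDS hTD
    -- (T ∪ D) ~ insert j (T ∪ D)
    have heq : T ∪ insert j D = insert j (T ∪ D) := by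
      ext x; simp only [Finset.mem_insert, Finset.mem_union]; tauto
    have hTDj : Indiff r (T ∪ D) (insert j (T ∪ D)) := by
      constructor
      · exact hr.2.2 _ _ (Finset.subset_insert _ _)
      · rw [← heq]
        exact hr.2.1 _ _ _ hind.2 hTD.1
    have hjSD : j ∉ S ∪ D := by
      simp only [Finset.mem_union]
      push_neg
      exact ⟨hjS, hjD⟩
    have hsub : T ∪ D ⊆ S ∪ D := Finset.union_subset_union_left hTS
    -- (S ∪ D) ~ insert j (S ∪ D)
    have hSDj : Indiff r (S ∪ D) (insert j (S ∪ D)) := by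
      rcases eq_or_ne (T ∪ D) (S ∪ D) with he | hne
      · rw [← he]; exact hTDj
      · exact hsat _ _ j (lt_of_le_of_ne hsub hne) hjSD hTDj
    have heq2 : S ∪ insert j D = insert j (S ∪ D) := by
      ext x; simp only [Finset.mem_insert, Finset.mem_union]; tauto
    rw [heq2]
    constructor
    · exact hr.2.2 _ _ ((Finset.subset_insert _ _).trans
        (Finset.insert_subset_insert _ (Finset.subset_union_left)))
    · exact hr.2.1 _ _ _ hSDj.2 hSD.2

lemma indiff_union (hr : IsMonotonePref r) (hsat : SatiationOnlyAtTop r)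
    {A B : Finset (Fin m)} (h : Indiff r (A ∩ B) A) : Indiff r B (A ∪ B) := by
  have h1 : (A ∩ B) ∪ (A \ B) = A := by
    ext x; simp only [Finset.mem_union, Finset.mem_inter, Finset.mem_sdiff]; tauto
  have h2 : B ∪ (A \ B) = A ∪ B := by
    rw [Finset.union_sdiff_self_eq_union, Finset.union_comm]
  have := key_lemma hr hsat (A \ B) (A ∩ B) B Finset.inter_subset_right
    Finset.sdiff_disjoint (by rw [h1]; exact h)
  rwa [h2] at this

lemma sub_key (hr : IsMonotonePref r) (hsat : SatiationOnlyAtTop r)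
    {A B : Finset (Fin m)} (hab : rnk r A ≤ rnk r B) :
    ((1:ℝ)/2) ^ rnk r A + ((1:ℝ)/2) ^ rnk r B ≤
      ((1:ℝ)/2) ^ rnk r (A ∪ B) + ((1:ℝ)/2) ^ rnk r (A ∩ B) := by
  have hiA : rnk r (A ∩ B) ≤ rnk r A :=
    rnk_mono hr (hr.2.2 _ _ Finset.inter_subset_left)
  have hbu : rnk r B ≤ rnk r (A ∪ B) :=
    rnk_mono hr (hr.2.2 _ _ Finset.subset_union_right)
  rcases eq_or_lt_of_le hiA with heq | hlt
  · -- A ∩ B ~ A, so A ∪ B ~ B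
    have hrAI : r A (A ∩ B) := (r_iff_rnk hr A (A ∩ B)).mpr heq.ge
    have hind : Indiff r (A ∩ B) A := ⟨hr.2.2 _ _ Finset.inter_subset_left, hrAI⟩
    have hind2 := indiff_union hr hsat hind
    have hub : rnk r (A ∪ B) = rnk r B :=
      le_antisymm (rnk_mono hr hind2.2) hbu
    rw [hub, ← heq]
    linarith
  · -- rnk (A∩B) < rnk A
    have h1 : rnk r (A ∩ B) + 1 ≤ rnk r A := hlt
    have e1 : ((1:ℝ)/2) ^ rnk r A ≤ ((1:ℝ)/2) ^ (rnk r (A ∩ B) + 1) :=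
      pow_le_pow_of_le_one (by norm_num) (by norm_num) h1
    have e2 : ((1:ℝ)/2) ^ rnk r B ≤ ((1:ℝ)/2) ^ rnk r A :=
      pow_le_pow_of_le_one (by norm_num) (by norm_num) hab
    have e3 : ((1:ℝ)/2) ^ (rnk r (A ∩ B) + 1) =
        (1/2) * ((1:ℝ)/2) ^ rnk r (A ∩ B) := by ring
    have e4 : (0:ℝ) ≤ ((1:ℝ)/2) ^ rnk r (A ∪ B) := by positivity
    nlinarith [e1, e2, e4]

end Aux

/-- every monotone ordinal preference satisfying satiation-only-at-the-top
can be represented by a (nonnegative) submodular valuation. -/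
theorem sat_at_top_implies_submodular {m : ℕ}
    (r : Finset (Fin m) → Finset (Fin m) → Prop)
    (hr : IsMonotonePref r) (hsat : SatiationOnlyAtTop r) :
    ∃ v : Finset (Fin m) → ℝ, (∀ A, 0 ≤ v A) ∧ Submodular v ∧ Represents v r := by
  refine ⟨fun A => 1 - ((1:ℝ)/2) ^ rnk r A, ?_, ?_, ?_⟩
  · intro A
    have : ((1:ℝ)/2) ^ rnk r A ≤ 1 :=
      pow_le_one₀ (by norm_num) (by norm_num)
    linarith
  · intro A B
    rcases le_total (rnk r A) (rnk r B) with h | h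
    · have := sub_key hr hsat h
      linarith
    · have := sub_key hr hsat h
      rw [Finset.union_comm, Finset.inter_comm] at this
      linarith
  · intro A B
    rw [r_iff_rnk hr]
    constructor
    · intro h
      have : ((1:ℝ)/2) ^ rnk r B ≤ ((1:ℝ)/2) ^ rnk r A :=
        pow_le_pow_of_le_one (by norm_num) (by norm_num) h
      linarith
    · intro h
      have h2 : ((1:ℝ)/2) ^ rnk r B ≤ ((1:ℝ)/2) ^ rnk r A := by linarith
      by_contra hc
      push_neg at hc
      have : ((1:ℝ)/2) ^ rnk r A < ((1:ℝ)/2) ^ rnk r B :=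
        pow_lt_pow_right_of_lt_one₀ (by norm_num) (by norm_num) hc
      linarith
end

section
/- If a monotone ordinal preference can be represented by a submodular valuation, then it satisfies satiation-only-at-the-top; hence the class of submodular-representable monotone preferences equals the class of monotone preferences satisfying satiation-only-at-the-top. -/
open Finset

/-- Auxiliary: under satiation-only-at-the-top, if adding a disjoint set `X` to `T`
changes nothing, then adding it to any superset `S` of `T` changes nothing. -/
lemma indiff_union_aux {m : ℕ} {r : Finset (Fin m) → Finset (Fin m) → Prop}
    (hr : IsMonotonePref r) (hs : SatiationOnlyAtTop r) :
    ∀ X T S : Finset (Fin m), T ⊆ S → Disjoint X S → Indiff r T (T ∪ X) →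
      Indiff r S (S ∪ X) := by
  intro X
  induction X using Finset.induction_on with
  | empty =>
    intro T S _ _ _
    simpa using ⟨hr.2.2 S S subset_rfl, hr.2.2 S S subset_rfl⟩
  | @insert j X hj ih =>
    intro T S hTS hdisj hind
    rcases eq_or_ssubset_of_subset hTS with hEq | hss
    · subst hEq; exact hind
    · have hjS : j ∉ S := (Finset.disjoint_left.1 hdisj) (mem_insert_self j X)
      have hindT : Indiff r T (insert j T) :=
        ⟨hr.2.2 _ _ (subset_insert j T),
          hr.2.1 _ _ _ (hr.2.2 _ _ (by
            intro x hx
            rcases Finset.mem_insert.1 hx with h | h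
            · exact Finset.mem_union_right _ (by simp [h])
            · exact Finset.mem_union_left _ h)) hind.2⟩
      have hindS : Indiff r S (insert j S) := hs T S j hss hjS hindT
      have hXS : Disjoint X S := (Finset.disjoint_insert_left.1 hdisj).2
      have hXjS : Disjoint X (insert j S) :=
        Finset.disjoint_insert_right.2 ⟨hj, hXS⟩
      have hunT : insert j T ∪ X = T ∪ insert j X := by
        rw [Finset.insert_union, Finset.union_insert]
      have hunS : insert j S ∪ X = S ∪ insert j X := by
        rw [Finset.insert_union, Finset.union_insert]
      have hindT' : Indiff r (insert j T) (insert j T ∪ X) := by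
        constructor
        · exact hr.2.2 _ _ Finset.subset_union_left
        · rw [hunT]
          exact hr.2.1 _ _ _ hind.2 (hr.2.2 _ _ (subset_insert j T))
      have key := ih (insert j T) (insert j S) (Finset.insert_subset_insert _ hTS)
        hXjS hindT'
      constructor
      · exact hr.2.2 _ _ Finset.subset_union_left
      · rw [← hunS]
        exact hr.2.1 _ _ _ key.2 hindS.2

/-- a monotone preference representable by a submodular valuation satisfies
satiation-only-at-the-top; hence the submodular-representable monotone preferences are
exactly those with satiation-only-at-the-top. -/
theorem submodular_iff_sat_at_top {m : ℕ}
    (r : Finset (Fin m) → Finset (Fin m) → Prop) (hr : IsMonotonePref r) :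
    (∃ v : Finset (Fin m) → ℝ, Submodular v ∧ Represents v r) ↔
      SatiationOnlyAtTop r := by
  classical
  constructor
  · rintro ⟨v, hsub, hrep⟩ T S j hTS hjS hind
    have hTj : S ∩ insert j T = T := by
      ext x
      simp only [Finset.mem_inter, Finset.mem_insert]
      constructor
      · rintro ⟨hxS, hx | hx⟩
        · exact absurd (hx ▸ hxS) hjS
        · exact hx
      · intro hx; exact ⟨hTS.1 hx, Or.inr hx⟩
    have hSj : S ∪ insert j T = insert j S := by
      ext x
      simp only [Finset.mem_union, Finset.mem_insert]
      constructor
      · rintro (hx | hx | hx)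
        · exact Or.inr hx
        · exact Or.inl hx
        · exact Or.inr (hTS.1 hx)
      · rintro (hx | hx)
        · exact Or.inr (Or.inl hx)
        · exact Or.inl hx
    have h1 := hsub S (insert j T)
    rw [hTj, hSj] at h1
    have h2 : v (insert j T) ≤ v T := (hrep _ _).1 hind.2
    have h3 : v (insert j S) ≤ v S := by linarith
    exact ⟨hr.2.2 _ _ (subset_insert j S), (hrep _ _).2 h3⟩
  · intro hs
    set k : Finset (Fin m) → ℕ :=
      fun S => ((Finset.univ : Finset (Finset (Fin m))).filter
        (fun T => SPref r T S)).card with hk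
    have hrefl : ∀ A, r A A := fun A => hr.2.2 A A subset_rfl
    have hkmono : ∀ A B, r A B → k A ≤ k B := by
      intro A B hAB
      apply Finset.card_le_card
      intro T hT
      simp only [Finset.mem_filter, Finset.mem_univ, true_and] at hT ⊢
      refine ⟨hr.2.1 _ _ _ hT.1 hAB, fun hBT => hT.2 (hr.2.1 _ _ _ hAB hBT)⟩
    have hkstrict : ∀ A B, SPref r A B → k A < k B := by
      intro A B hAB
      apply Finset.card_lt_card
      constructor
      · intro T hT
        simp only [Finset.mem_filter, Finset.mem_univ, true_and] at hT ⊢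
        refine ⟨hr.2.1 _ _ _ hT.1 hAB.1, fun hBT => hAB.2 (hr.2.1 _ _ _ hBT hT.1)⟩
      · intro hsub
        have hA : A ∈ (Finset.univ : Finset (Finset (Fin m))).filter
            (fun T => SPref r T B) := by
          simp only [Finset.mem_filter, Finset.mem_univ, true_and]; exact hAB
        have := hsub hA
        simp only [Finset.mem_filter, Finset.mem_univ, true_and] at this
        exact this.2 (hrefl A)
    have hkiff : ∀ A B, r A B ↔ k A ≤ k B := by
      intro A B
      constructor
      · exact hkmono A B
      · intro hle
        by_contra hAB
        rcases hr.1 A B with h | h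
        · exact hAB h
        · exact absurd (hkstrict B A ⟨h, hAB⟩) (by omega)
    refine ⟨fun S => 1 - (1/2 : ℝ) ^ (k S), ?_, ?_⟩
    · intro A B
      have hiA : r (A ∩ B) A := hr.2.2 _ _ Finset.inter_subset_left
      have hiB : r (A ∩ B) B := hr.2.2 _ _ Finset.inter_subset_right
      have huA : r A (A ∪ B) := hr.2.2 _ _ Finset.subset_union_left
      have huB : r B (A ∪ B) := hr.2.2 _ _ Finset.subset_union_right
      by_cases hA : r A (A ∩ B)
      · -- A ∩ B indifferent to A, hence B indifferent to A ∪ B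
        have hun : Indiff r B (A ∪ B) := by
          have := indiff_union_aux hr hs (A \ B) (A ∩ B) B
            Finset.inter_subset_right (Finset.sdiff_disjoint) ?_
          · rwa [Finset.union_sdiff_self_eq_union, Finset.union_comm] at this
          · have hEq : A ∩ B ∪ A \ B = A := by
              ext x
              simp only [Finset.mem_union, Finset.mem_inter, Finset.mem_sdiff]
              tauto
            rw [hEq]
            exact ⟨hiA, hA⟩
        have e1 : k (A ∩ B) = k A := le_antisymm (hkmono _ _ hiA) (hkmono _ _ hA)
        have e2 : k (A ∪ B) = k B := le_antisymm (hkmono _ _ hun.2) (hkmono _ _ hun.1)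
        dsimp only; rw [e1, e2]; linarith
      · by_cases hB : r B (A ∩ B)
        · have hun : Indiff r A (A ∪ B) := by
            have := indiff_union_aux hr hs (B \ A) (A ∩ B) A
              Finset.inter_subset_left (Finset.sdiff_disjoint) ?_
            · rwa [Finset.union_sdiff_self_eq_union] at this
            · have hEq : A ∩ B ∪ B \ A = B := by
                ext x
                simp only [Finset.mem_union, Finset.mem_inter, Finset.mem_sdiff]
                tauto
              rw [hEq]
              exact ⟨hiB, hB⟩
          have e1 : k (A ∩ B) = k B := le_antisymm (hkmono _ _ hiB) (hkmono _ _ hB)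
          have e2 : k (A ∪ B) = k A := le_antisymm (hkmono _ _ hun.2) (hkmono _ _ hun.1)
          dsimp only; rw [e1, e2]
        · have hia : k (A ∩ B) < k A := hkstrict _ _ ⟨hiA, hA⟩
          have hib : k (A ∩ B) < k B := hkstrict _ _ ⟨hiB, hB⟩
          have hpos : (0:ℝ) < 1/2 := by norm_num
          have hxa : (1/2:ℝ) ^ (k A) ≤ (1/2:ℝ) ^ (k (A ∩ B) + 1) :=
            pow_le_pow_of_le_one (by norm_num) (by norm_num) (by omega)
          have hxb : (1/2:ℝ) ^ (k B) ≤ (1/2:ℝ) ^ (k (A ∩ B) + 1) :=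
            pow_le_pow_of_le_one (by norm_num) (by norm_num) (by omega)
          have hsum : (1/2:ℝ) ^ (k (A ∩ B) + 1) + (1/2:ℝ) ^ (k (A ∩ B) + 1)
              = (1/2:ℝ) ^ (k (A ∩ B)) := by
            rw [pow_succ]; ring
          have hu : (0:ℝ) ≤ (1/2:ℝ) ^ (k (A ∪ B)) := by positivity
          dsimp only
          nlinarith [hxa, hxb, hsum, hu]
    · intro A B
      rw [hkiff A B]
      dsimp only
      constructor
      · intro hle
        have : (1/2:ℝ) ^ (k B) ≤ (1/2:ℝ) ^ (k A) :=
          pow_le_pow_of_le_one (by norm_num) (by norm_num) hle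
        linarith
      · intro hle
        by_contra h
        push_neg at h
        have := pow_lt_pow_right_of_lt_one₀ (by norm_num : (0:ℝ) < 1/2)
          (by norm_num : (1/2:ℝ) < 1) h
        linarith
end

section
/- Every strict monotone preference over bundles can be represented by a submodular valuation. -/
open Finset

open scoped Classical in
/-- Rank of a bundle: number of bundles weakly below it. -/
noncomputable def sisRk {m : ℕ} (r : Finset (Fin m) → Finset (Fin m) → Prop)
    (A : Finset (Fin m)) : ℕ :=
  (Finset.univ.filter (fun B => r B A)).card

/-- every strict monotone preference can be represented by a
(nonnegative) submodular valuation. -/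
theorem strict_implies_submodular {m : ℕ}
    (r : Finset (Fin m) → Finset (Fin m) → Prop)
    (hr : IsMonotonePref r)
    (hstrict : ∀ A B : Finset (Fin m), r A B → r B A → A = B) :
    ∃ v : Finset (Fin m) → ℝ, (∀ A, 0 ≤ v A) ∧ Submodular v ∧ Represents v r := by
  classical
  obtain ⟨htot, htrans, hmono⟩ := hr
  have hrefl : ∀ A, r A A := fun A => (htot A A).elim id id
  -- rank characterization
  have hrk_mono : ∀ A B, r A B → sisRk r A ≤ sisRk r B := by
    intro A B hAB
    apply Finset.card_le_card
    intro C hC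
    simp only [Finset.mem_filter, Finset.mem_univ, true_and] at hC ⊢
    exact htrans C A B hC hAB
  have hrk_iff : ∀ A B, r A B ↔ sisRk r A ≤ sisRk r B := by
    intro A B
    constructor
    · exact hrk_mono A B
    · intro h
      by_contra hAB
      have hBA : r B A := (htot A B).resolve_left hAB
      have hss : (Finset.univ.filter (fun C => r C B)) ⊂
          (Finset.univ.filter (fun C => r C A)) := by
        constructor
        · intro C hC
          simp only [Finset.mem_filter, Finset.mem_univ, true_and] at hC ⊢
          exact htrans C B A hC hBA
        · intro hsub
          have : A ∈ Finset.univ.filter (fun C => r C B) := by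
            apply hsub
            simp [hrefl A]
          simp only [Finset.mem_filter] at this
          exact hAB this.2
      have hcard := Finset.card_lt_card hss
      unfold sisRk at h
      omega
  have hrk_strict : ∀ A B : Finset (Fin m), A ⊂ B → sisRk r A < sisRk r B := by
    intro A B hAB
    have h1 : sisRk r A ≤ sisRk r B := hrk_mono A B (hmono A B hAB.subset)
    rcases lt_or_eq_of_le h1 with h | h
    · exact h
    · exfalso
      have hBA : r B A := (hrk_iff B A).2 h.ge
      have := hstrict A B (hmono A B hAB.subset) hBA
      exact hAB.ne this
  -- the valuation
  set v : Finset (Fin m) → ℝ := fun A => 2 - (1/2 : ℝ) ^ (sisRk r A) with hv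
  have hpow_pos : ∀ k : ℕ, (0:ℝ) < (1/2:ℝ)^k := fun k => pow_pos (by norm_num) k
  have hpow_le_one : ∀ k : ℕ, (1/2:ℝ)^k ≤ 1 := fun k =>
    pow_le_one₀ (by norm_num) (by norm_num)
  have hpow_anti : ∀ {a b : ℕ}, a ≤ b → (1/2:ℝ)^b ≤ (1/2:ℝ)^a := by
    intro a b hab
    exact pow_le_pow_of_le_one (by norm_num) (by norm_num) hab
  refine ⟨v, ?_, ?_, ?_⟩
  · intro A
    have := hpow_le_one (sisRk r A)
    simp only [hv]
    linarith
  · -- Submodular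
    intro A B
    by_cases hAB : A ⊆ B
    · rw [Finset.union_eq_right.2 hAB, Finset.inter_eq_left.2 hAB]
      linarith
    by_cases hBA : B ⊆ A
    · rw [Finset.union_eq_left.2 hBA, Finset.inter_eq_right.2 hBA]
    · have hiA : A ∩ B ⊂ A := by
        refine ⟨Finset.inter_subset_left, fun h => hAB ?_⟩
        intro x hx
        exact Finset.mem_of_mem_inter_right (h hx)
      have hiB : A ∩ B ⊂ B := by
        refine ⟨Finset.inter_subset_right, fun h => hBA ?_⟩
        intro x hx
        exact Finset.mem_of_mem_inter_left (h hx)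
      have h1 : sisRk r (A ∩ B) < sisRk r A := hrk_strict _ _ hiA
      have h2 : sisRk r (A ∩ B) < sisRk r B := hrk_strict _ _ hiB
      have hA' : (1/2:ℝ)^(sisRk r A) ≤ (1/2:ℝ)^(sisRk r (A ∩ B) + 1) := hpow_anti h1
      have hB' : (1/2:ℝ)^(sisRk r B) ≤ (1/2:ℝ)^(sisRk r (A ∩ B) + 1) := hpow_anti h2
      have hsucc : (1/2:ℝ)^(sisRk r (A ∩ B) + 1) + (1/2:ℝ)^(sisRk r (A ∩ B) + 1)
          = (1/2:ℝ)^(sisRk r (A ∩ B)) := by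
        rw [pow_succ]; ring
      have hU := hpow_pos (sisRk r (A ∪ B))
      simp only [hv]
      nlinarith
  · -- Represents
    intro A B
    rw [hrk_iff A B]
    constructor
    · intro h
      have := hpow_anti h
      simp only [hv]
      linarith
    · intro h
      simp only [hv] at h
      have hle : (1/2:ℝ)^(sisRk r B) ≤ (1/2:ℝ)^(sisRk r A) := by linarith
      by_contra hc
      push_neg at hc
      have h1 : (1/2:ℝ)^(sisRk r A) ≤ (1/2:ℝ)^(sisRk r B + 1) :=
        hpow_anti (Nat.succ_le_of_lt hc)
      have h2 : (1/2:ℝ)^(sisRk r B + 1) < (1/2:ℝ)^(sisRk r B) := by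
        rw [pow_succ]
        nlinarith [hpow_pos (sisRk r B)]
      linarith
end

section
/- In the 5-item market of Example 1 with b_1 > b_2 and (4/3) b_2 > b_1, there is no competitive equilibrium in which Alice receives both items A and B (or any superset of {A,B}). -/
open Finset

lemma vBob_20 : vBob {2, 0} = 701 := by
  rw [vBob]
  norm_num [show ((0:Fin 5) ∈ ({2,0}:Finset (Fin 5))) ↔ True from by decide,
    show ((1:Fin 5) ∈ ({2,0}:Finset (Fin 5))) ↔ False from by decide,
    show ((2:Fin 5) ∈ ({2,0}:Finset (Fin 5))) ↔ True from by decide,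
    show ((3:Fin 5) ∈ ({2,0}:Finset (Fin 5))) ↔ False from by decide,
    show ((4:Fin 5) ∈ ({2,0}:Finset (Fin 5))) ↔ False from by decide]

lemma vBob_30 : vBob {3, 0} = 702 := by
  rw [vBob]
  norm_num [show ((0:Fin 5) ∈ ({3,0}:Finset (Fin 5))) ↔ True from by decide,
    show ((1:Fin 5) ∈ ({3,0}:Finset (Fin 5))) ↔ False from by decide,
    show ((2:Fin 5) ∈ ({3,0}:Finset (Fin 5))) ↔ False from by decide,
    show ((3:Fin 5) ∈ ({3,0}:Finset (Fin 5))) ↔ True from by decide,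
    show ((4:Fin 5) ∈ ({3,0}:Finset (Fin 5))) ↔ False from by decide]

lemma vBob_40 : vBob {4, 0} = 703 := by
  rw [vBob]
  norm_num [show ((0:Fin 5) ∈ ({4,0}:Finset (Fin 5))) ↔ True from by decide,
    show ((1:Fin 5) ∈ ({4,0}:Finset (Fin 5))) ↔ False from by decide,
    show ((2:Fin 5) ∈ ({4,0}:Finset (Fin 5))) ↔ False from by decide,
    show ((3:Fin 5) ∈ ({4,0}:Finset (Fin 5))) ↔ False from by decide,
    show ((4:Fin 5) ∈ ({4,0}:Finset (Fin 5))) ↔ True from by decide]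

lemma vBob_21 : vBob {2, 1} = 702 := by
  rw [vBob]
  norm_num [show ((0:Fin 5) ∈ ({2,1}:Finset (Fin 5))) ↔ False from by decide,
    show ((1:Fin 5) ∈ ({2,1}:Finset (Fin 5))) ↔ True from by decide,
    show ((2:Fin 5) ∈ ({2,1}:Finset (Fin 5))) ↔ True from by decide,
    show ((3:Fin 5) ∈ ({2,1}:Finset (Fin 5))) ↔ False from by decide,
    show ((4:Fin 5) ∈ ({2,1}:Finset (Fin 5))) ↔ False from by decide]

lemma vBob_31 : vBob {3, 1} = 703 := by
  rw [vBob]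
  norm_num [show ((0:Fin 5) ∈ ({3,1}:Finset (Fin 5))) ↔ False from by decide,
    show ((1:Fin 5) ∈ ({3,1}:Finset (Fin 5))) ↔ True from by decide,
    show ((2:Fin 5) ∈ ({3,1}:Finset (Fin 5))) ↔ False from by decide,
    show ((3:Fin 5) ∈ ({3,1}:Finset (Fin 5))) ↔ True from by decide,
    show ((4:Fin 5) ∈ ({3,1}:Finset (Fin 5))) ↔ False from by decide]

lemma vBob_41 : vBob {4, 1} = 704 := by
  rw [vBob]
  norm_num [show ((0:Fin 5) ∈ ({4,1}:Finset (Fin 5))) ↔ False from by decide,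
    show ((1:Fin 5) ∈ ({4,1}:Finset (Fin 5))) ↔ True from by decide,
    show ((2:Fin 5) ∈ ({4,1}:Finset (Fin 5))) ↔ False from by decide,
    show ((3:Fin 5) ∈ ({4,1}:Finset (Fin 5))) ↔ False from by decide,
    show ((4:Fin 5) ∈ ({4,1}:Finset (Fin 5))) ↔ True from by decide]

lemma vBob_s0 : vBob {0} = 500 := by
  rw [vBob]
  norm_num [show ((0:Fin 5) ∈ ({0}:Finset (Fin 5))) ↔ True from by decide,
    show ((1:Fin 5) ∈ ({0}:Finset (Fin 5))) ↔ False from by decide,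
    show ((2:Fin 5) ∈ ({0}:Finset (Fin 5))) ↔ False from by decide,
    show ((3:Fin 5) ∈ ({0}:Finset (Fin 5))) ↔ False from by decide,
    show ((4:Fin 5) ∈ ({0}:Finset (Fin 5))) ↔ False from by decide]

lemma vBob_s1 : vBob {1} = 501 := by
  rw [vBob]
  norm_num [show ((0:Fin 5) ∈ ({1}:Finset (Fin 5))) ↔ False from by decide,
    show ((1:Fin 5) ∈ ({1}:Finset (Fin 5))) ↔ True from by decide,
    show ((2:Fin 5) ∈ ({1}:Finset (Fin 5))) ↔ False from by decide,
    show ((3:Fin 5) ∈ ({1}:Finset (Fin 5))) ↔ False from by decide,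
    show ((4:Fin 5) ∈ ({1}:Finset (Fin 5))) ↔ False from by decide]

/-- in the market of Example 1 with `(4/3)·b₂ > b₁ > b₂ > 0`, there is no
CE in which Alice's bundle contains both items A and B. -/
theorem alice_cannot_get_AB (b₁ b₂ : ℝ) (hb2 : 0 < b₂) (hb1 : b₂ < b₁)
    (hb43 : b₁ < 4 / 3 * b₂)
    (S : Fin 2 → Finset (Fin 5)) (p : Fin 5 → ℝ)
    (hCE : IsCE prefEx1 ![b₁, b₂] S p) :
    ¬ ((0 : Fin 5) ∈ S 0 ∧ (1 : Fin 5) ∈ S 0) := by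
  rintro ⟨hA0, hB0⟩
  obtain ⟨⟨hdisj, hcover⟩, hp, hcond⟩ := hCE
  obtain ⟨hbud0, hopt0⟩ := hcond 0
  obtain ⟨hbud1, hopt1⟩ := hcond 1
  have hb0 : (![b₁, b₂] : Fin 2 → ℝ) 0 = b₁ := rfl
  have hb1e : (![b₁, b₂] : Fin 2 → ℝ) 1 = b₂ := rfl
  rw [hb0] at hbud0
  rw [hb1e] at hbud1
  have hd : Disjoint (S 0) (S 1) := hdisj 0 1 (by decide)
  have hn0 : (0 : Fin 5) ∉ S 1 := Finset.disjoint_left.mp hd hA0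
  have hn1 : (1 : Fin 5) ∉ S 1 := Finset.disjoint_left.mp hd hB0
  have hmem : ∀ x : Fin 5, x ∈ S 0 ∨ x ∈ S 1 := by
    intro x
    have hx : x ∈ Finset.univ.biUnion S := by rw [hcover]; exact Finset.mem_univ x
    obtain ⟨i, _, hi⟩ := Finset.mem_biUnion.mp hx
    fin_cases i
    · exact Or.inl hi
    · exact Or.inr hi
  have hsub : ∀ (T : Finset (Fin 5)) (i : Fin 2), T ⊆ S i → price p T ≤ price p (S i) :=
    fun T i h => Finset.sum_le_sum_of_subset_of_nonneg h (fun j _ _ => hp j)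
  have hP : p 0 + p 1 ≤ b₁ := by
    have h01 : ({0, 1} : Finset (Fin 5)) ⊆ S 0 := by
      intro x hx
      simp only [Finset.mem_insert, Finset.mem_singleton] at hx
      rcases hx with rfl | rfl
      · exact hA0
      · exact hB0
    have := hsub {0, 1} 0 h01
    rw [price, Finset.sum_pair (by decide : (0 : Fin 5) ≠ 1)] at this
    linarith
  have bobPref : ∀ T, vBob (S 1) < vBob T → b₂ < price p T := by
    intro T hv
    have hs : SPref (prefEx1 1) (S 1) T := by
      constructor
      · show prefEx1 1 (S 1) T
        simp only [prefEx1, if_neg (by decide : ¬(1 : Fin 2) = 0)]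
        exact hv.le
      · show ¬ prefEx1 1 T (S 1)
        simp only [prefEx1, if_neg (by decide : ¬(1 : Fin 2) = 0)]
        exact not_le.mpr hv
    have := hopt1 T hs
    rwa [hb1e] at this
  by_cases h2 : (2 : Fin 5) ∈ S 1
  · by_cases h3 : (3 : Fin 5) ∈ S 1
    · by_cases h4 : (4 : Fin 5) ∈ S 1
      · -- Bob holds all of C, D, E
        have hQ : p 2 + p 3 + p 4 ≤ b₂ := by
          have h234 : ({2, 3, 4} : Finset (Fin 5)) ⊆ S 1 := by
            intro x hx
            simp only [Finset.mem_insert, Finset.mem_singleton] at hx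
            rcases hx with rfl | rfl | rfl
            · exact h2
            · exact h3
            · exact h4
          have := hsub {2, 3, 4} 1 h234
          rw [price, show ({2,3,4} : Finset (Fin 5)) = insert 2 {3,4} from rfl,
            Finset.sum_insert (by decide : (2 : Fin 5) ∉ ({3,4} : Finset (Fin 5))), Finset.sum_pair (by decide : (3 : Fin 5) ≠ 4)] at this
          linarith
        have hv1 : vBob (S 1) = 606 := by
          norm_num [vBob, hn0, hn1, h2, h3, h4]
        have key : ∀ x : Fin 5, x = 2 ∨ x = 3 ∨ x = 4 →
            (b₂ < p x + p 0 ∧ b₂ < p x + p 1) := by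
          intro x hx
          constructor
          · have := bobPref {x, 0} ?_
            · rwa [price, Finset.sum_pair (by rcases hx with rfl | rfl | rfl <;> decide : x ≠ 0)] at this
            · rw [hv1]
              rcases hx with rfl | rfl | rfl
              · rw [vBob_20]; norm_num
              · rw [vBob_30]; norm_num
              · rw [vBob_40]; norm_num
          · have := bobPref {x, 1} ?_
            · rwa [price, Finset.sum_pair (by rcases hx with rfl | rfl | rfl <;> decide : x ≠ 1)] at this
            · rw [hv1]
              rcases hx with rfl | rfl | rfl
              · rw [vBob_21]; norm_num
              · rw [vBob_31]; norm_num
              · rw [vBob_41]; norm_num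
        obtain ⟨k2a, k2b⟩ := key 2 (Or.inl rfl)
        obtain ⟨k3a, k3b⟩ := key 3 (Or.inr (Or.inl rfl))
        obtain ⟨k4a, k4b⟩ := key 4 (Or.inr (Or.inr rfl))
        linarith
      · -- item E with Alice: Bob prefers {A}
        have hv1 : vBob (S 1) < 500 := by
          rw [vBob, if_neg (fun h => hn0 h.1), if_neg hn0, if_neg hn1, if_neg h4]
          split_ifs <;> norm_num
        have kA : b₂ < p 0 := by
          have := bobPref {0} (by rw [vBob_s0]; exact hv1)
          rwa [price, Finset.sum_singleton] at this
        have kB : b₂ < p 1 := by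
          have := bobPref {1} (by rw [vBob_s1]; linarith)
          rwa [price, Finset.sum_singleton] at this
        linarith
    · have hv1 : vBob (S 1) < 500 := by
        rw [vBob, if_neg (fun h => hn0 h.1), if_neg hn0, if_neg hn1, if_neg h3]
        split_ifs <;> norm_num
      have kA : b₂ < p 0 := by
        have := bobPref {0} (by rw [vBob_s0]; exact hv1)
        rwa [price, Finset.sum_singleton] at this
      have kB : b₂ < p 1 := by
        have := bobPref {1} (by rw [vBob_s1]; linarith)
        rwa [price, Finset.sum_singleton] at this
      linarith
  · have hv1 : vBob (S 1) < 500 := by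
      rw [vBob, if_neg (fun h => hn0 h.1), if_neg hn0, if_neg hn1, if_neg h2]
      split_ifs <;> norm_num
    have kA : b₂ < p 0 := by
      have := bobPref {0} (by rw [vBob_s0]; exact hv1)
      rwa [price, Finset.sum_singleton] at this
    have kB : b₂ < p 1 := by
      have := bobPref {1} (by rw [vBob_s1]; linarith)
      rwa [price, Finset.sum_singleton] at this
    linarith
end
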